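/- The nonlocal strain S(y,x,u) = ((u(y)-u(x))/|y-x|)·e_{y-x} vanishes for almost every x ∈ Ω and y ∈ H_ε(x) ∩ Ω if and only if u is a rigid motion, i.e., u(x) = Qx + c with Q a skew-symmetric d×d matrix and c ∈ ℝ^d. -/
import Mathlib


open MeasureTheory
open scoped RealInnerProductSpace

/-- The unit vector `e_{y-x} = (y-x)/|y-x|`. -/
noncomputable def unitVec {d : ℕ} (y x : EuclideanSpace ℝ (Fin d)) :
    EuclideanSpace ℝ (Fin d) := ‖y - x‖⁻¹ • (y - x)

/-- The nonlocal strain `S(y,x,u) = ((u(y)-u(x))/|y-x|) ⬝ e_{y-x}`. -/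
noncomputable def strain {d : ℕ} (y x : EuclideanSpace ℝ (Fin d))
    (u : EuclideanSpace ℝ (Fin d) → EuclideanSpace ℝ (Fin d)) : ℝ :=
  ‖y - x‖⁻¹ * ⟪u y - u x, unitVec y x⟫

lemma strain_eq {d : ℕ} (y x : EuclideanSpace ℝ (Fin d)) (u) :
    strain y x u = ‖y - x‖⁻¹ * (‖y - x‖⁻¹ * ⟪u y - u x, y - x⟫) := by
  unfold strain unitVec
  rw [real_inner_smul_right]

lemma strain_zero_iff {d : ℕ} (y x : EuclideanSpace ℝ (Fin d)) (u) (hxy : y ≠ x) :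
    strain y x u = 0 ↔ ⟪u y - u x, y - x⟫ = 0 := by
  have h : ‖y - x‖ ≠ 0 := norm_ne_zero_iff.2 (sub_ne_zero.2 hxy)
  rw [strain_eq]
  constructor
  · intro h0
    rcases mul_eq_zero.1 h0 with h1 | h1
    · exact absurd h1 (inv_ne_zero h)
    · rcases mul_eq_zero.1 h1 with h2 | h2
      · exact absurd h2 (inv_ne_zero h)
      · exact h2
  · intro h0; rw [h0]; ring

lemma open_null_empty {d : ℕ} (A : Set (EuclideanSpace ℝ (Fin d))) (hA : IsOpen A)
    (h0 : volume A = 0) : A = ∅ := by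
  by_contra h
  have := hA.measure_pos volume (Set.nonempty_iff_ne_empty.2 h)
  simp [h0] at this

lemma stepA {d : ℕ} (ε : ℝ) (Ω : Set (EuclideanSpace ℝ (Fin d))) (hΩo : IsOpen Ω)
    (u : EuclideanSpace ℝ (Fin d) → EuclideanSpace ℝ (Fin d)) (hu : ContinuousOn u Ω)
    (x : EuclideanSpace ℝ (Fin d))
    (h : ∀ᵐ y ∂(volume.restrict (Metric.ball x ε ∩ Ω)), strain y x u = 0) :
    ∀ y ∈ Ω, dist y x < ε → ⟪u y - u x, y - x⟫ = 0 := by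
  have hmeas : MeasurableSet (Metric.ball x ε ∩ Ω) :=
    measurableSet_ball.inter hΩo.measurableSet
  have h' := (ae_restrict_iff' hmeas).1 h
  set A : Set (EuclideanSpace ℝ (Fin d)) :=
    (Ω ∩ (fun y => ⟪u y - u x, y - x⟫) ⁻¹' {(0:ℝ)}ᶜ) ∩ (Metric.ball x ε ∩ {x}ᶜ) with hA
  have hcont : ContinuousOn (fun y => ⟪u y - u x, y - x⟫) Ω :=
    (hu.sub continuousOn_const).inner ((continuous_id.sub continuous_const).continuousOn)
  have hAopen : IsOpen A := by
    apply IsOpen.inter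
    · exact hcont.isOpen_inter_preimage hΩo isOpen_compl_singleton
    · exact Metric.isOpen_ball.inter isOpen_compl_singleton
  have hAnull : volume A = 0 := by
    refine measure_mono_null ?_ (ae_iff.1 h')
    rintro y ⟨⟨hyΩ, hyne⟩, hyb, hyx⟩
    simp only [Set.mem_setOf_eq]
    intro himp
    have := himp ⟨hyb, hyΩ⟩
    exact hyne ((strain_zero_iff y x u hyx).1 this)
  have hempty : A = ∅ := open_null_empty A hAopen hAnull
  intro y hy hyd
  by_cases hyx : y = x
  · subst hyx; simp
  · by_contra hne
    have : y ∈ A := ⟨⟨hy, hne⟩, Metric.mem_ball.2 hyd, hyx⟩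
    rw [hempty] at this
    exact this

lemma ptwise {d : ℕ} (ε : ℝ) (Ω : Set (EuclideanSpace ℝ (Fin d))) (hΩo : IsOpen Ω)
    (u : EuclideanSpace ℝ (Fin d) → EuclideanSpace ℝ (Fin d)) (hu : ContinuousOn u Ω)
    (hae : ∀ᵐ x ∂(volume.restrict Ω),
        ∀ᵐ y ∂(volume.restrict (Metric.ball x ε ∩ Ω)), strain y x u = 0) :
    ∀ x ∈ Ω, ∀ y ∈ Ω, dist y x < ε → ⟪u y - u x, y - x⟫ = 0 := by
  have hae' := (ae_restrict_iff' hΩo.measurableSet).1 hae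
  set Bad : Set (EuclideanSpace ℝ (Fin d)) :=
    {x | x ∈ Ω ∧ ∃ y ∈ Ω, dist y x < ε ∧ ⟪u y - u x, y - x⟫ ≠ 0} with hBad
  have hBadnull : volume Bad = 0 := by
    refine measure_mono_null ?_ (ae_iff.1 hae')
    rintro x ⟨hxΩ, y, hyΩ, hyd, hyne⟩
    simp only [Set.mem_setOf_eq]
    intro himp
    exact hyne (stepA ε Ω hΩo u hu x (himp hxΩ) y hyΩ hyd)
  have hBadopen : IsOpen Bad := by
    rw [isOpen_iff_mem_nhds]
    rintro x ⟨hxΩ, y, hyΩ, hyd, hyne⟩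
    have hcont : ContinuousOn (fun x' => ⟪u y - u x', y - x'⟫) Ω :=
      (continuousOn_const.sub hu).inner (continuousOn_const.sub continuous_id.continuousOn)
    have hU : IsOpen ((Ω ∩ (fun x' => ⟪u y - u x', y - x'⟫) ⁻¹' {(0:ℝ)}ᶜ) ∩ Metric.ball y ε) :=
      (hcont.isOpen_inter_preimage hΩo isOpen_compl_singleton).inter Metric.isOpen_ball
    refine Filter.mem_of_superset (hU.mem_nhds ⟨⟨hxΩ, hyne⟩, ?_⟩) ?_
    · exact Metric.mem_ball.2 (by rw [dist_comm]; exact hyd)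
    · rintro x' ⟨⟨hx'Ω, hx'ne⟩, hx'b⟩
      exact ⟨hx'Ω, y, hyΩ, by rw [dist_comm]; exact Metric.mem_ball.1 hx'b, hx'ne⟩
  have hBadempty : Bad = ∅ := open_null_empty Bad hBadopen hBadnull
  intro x hx y hy hyd
  by_contra hne
  have : x ∈ Bad := ⟨hx, y, hy, hyd, hne⟩
  rw [hBadempty] at this
  exact this

lemma linearize {d : ℕ} (ρ : ℝ) (hρ : 0 < ρ)
    (v : EuclideanSpace ℝ (Fin d) → EuclideanSpace ℝ (Fin d))
    (hv0 : v 0 = 0)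
    (hskew : ∀ h k : EuclideanSpace ℝ (Fin d), ‖h‖ < ρ → ‖k‖ < ρ →
      ⟪v h, k⟫ = -⟪v k, h⟫)
    (hlin : ∀ (a b : ℝ) (h k : EuclideanSpace ℝ (Fin d)), ‖h‖ < ρ → ‖k‖ < ρ →
      ‖a • h + b • k‖ < ρ → v (a • h + b • k) = a • v h + b • v k) :
    ∃ (Q : EuclideanSpace ℝ (Fin d) →ₗ[ℝ] EuclideanSpace ℝ (Fin d)),
      (∀ w m : EuclideanSpace ℝ (Fin d), ⟪Q w, m⟫ = -⟪w, Q m⟫) ∧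
      (∀ h : EuclideanSpace ℝ (Fin d), ‖h‖ < ρ → Q h = v h) := by
  have hscale : ∀ (a : ℝ) (h : EuclideanSpace ℝ (Fin d)), ‖h‖ < ρ → ‖a • h‖ < ρ →
      v (a • h) = a • v h := by
    intro a h hh hah
    have h0 : ‖(0 : EuclideanSpace ℝ (Fin d))‖ < ρ := by simpa using hρ
    have := hlin a 0 h 0 hh h0 (by simpa using hah)
    simpa [hv0] using this
  have coh : ∀ (w : EuclideanSpace ℝ (Fin d)) (t₁ t₂ : ℝ), t₁ ≠ 0 → t₂ ≠ 0 →
      ‖t₁ • w‖ < ρ → ‖t₂ • w‖ < ρ → t₁⁻¹ • v (t₁ • w) = t₂⁻¹ • v (t₂ • w) := by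
    intro w t₁ t₂ ht₁ ht₂ h1 h2
    have he : t₂ • w = (t₂ / t₁) • (t₁ • w) := by
      rw [smul_smul, div_mul_cancel₀ _ ht₁]
    have := hscale (t₂ / t₁) (t₁ • w) h1 (by rw [← he]; exact h2)
    rw [← he] at this
    rw [this, smul_smul]
    congr 1
    field_simp
  set σ : EuclideanSpace ℝ (Fin d) → ℝ := fun w => ρ / (2 * (‖w‖ + 1)) with hσ
  have hσpos : ∀ w, 0 < σ w := by
    intro w; have : (0:ℝ) ≤ ‖w‖ := norm_nonneg w; positivity
  have hσball : ∀ w : EuclideanSpace ℝ (Fin d), ‖σ w • w‖ < ρ := by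
    intro w
    rw [norm_smul, Real.norm_eq_abs, abs_of_pos (hσpos w), hσ]
    have h1 : (0:ℝ) ≤ ‖w‖ := norm_nonneg w
    rw [div_mul_eq_mul_div, div_lt_iff₀ (by positivity)]
    nlinarith
  set Qf : EuclideanSpace ℝ (Fin d) → EuclideanSpace ℝ (Fin d) :=
    fun w => (σ w)⁻¹ • v (σ w • w) with hQf
  have hQeq : ∀ (w : EuclideanSpace ℝ (Fin d)) (t : ℝ), t ≠ 0 → ‖t • w‖ < ρ →
      Qf w = t⁻¹ • v (t • w) := by
    intro w t ht hb
    exact coh w (σ w) t (ne_of_gt (hσpos w)) ht (hσball w) hb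
  have hQf0 : Qf 0 = 0 := by
    simp [hQf, hv0]
  have hadd : ∀ w₁ w₂, Qf (w₁ + w₂) = Qf w₁ + Qf w₂ := by
    intro w₁ w₂
    set t : ℝ := ρ / (2 * (‖w₁‖ + ‖w₂‖ + 1)) with htdef
    have h1 : (0:ℝ) ≤ ‖w₁‖ := norm_nonneg _
    have h2 : (0:ℝ) ≤ ‖w₂‖ := norm_nonneg _
    have ht : 0 < t := by positivity
    have hb1 : ‖t • w₁‖ < ρ := by
      rw [norm_smul, Real.norm_eq_abs, abs_of_pos ht, htdef,
        div_mul_eq_mul_div, div_lt_iff₀ (by positivity)]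
      nlinarith
    have hb2 : ‖t • w₂‖ < ρ := by
      rw [norm_smul, Real.norm_eq_abs, abs_of_pos ht, htdef,
        div_mul_eq_mul_div, div_lt_iff₀ (by positivity)]
      nlinarith
    have hb3 : ‖t • (w₁ + w₂)‖ < ρ := by
      rw [norm_smul, Real.norm_eq_abs, abs_of_pos ht]
      have : ‖w₁ + w₂‖ ≤ ‖w₁‖ + ‖w₂‖ := norm_add_le _ _
      rw [htdef]
      rw [div_mul_eq_mul_div, div_lt_iff₀ (by positivity)]
      nlinarith
    rw [hQeq (w₁ + w₂) t (ne_of_gt ht) hb3, hQeq w₁ t (ne_of_gt ht) hb1,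
      hQeq w₂ t (ne_of_gt ht) hb2]
    have : v (t • (w₁ + w₂)) = v (t • w₁) + v (t • w₂) := by
      have := hlin 1 1 (t • w₁) (t • w₂) hb1 hb2 (by simpa [smul_add] using hb3)
      simpa [smul_add] using this
    rw [this, smul_add]
  have hsmul : ∀ (a : ℝ) w, Qf (a • w) = a • Qf w := by
    intro a w
    by_cases ha : a = 0
    · simp [ha, hQf0]
    · set t : ℝ := ρ / (2 * (‖w‖ + 1) * (|a| + 1)) with htdef
      have h1 : (0:ℝ) ≤ ‖w‖ := norm_nonneg _
      have h2 : (0:ℝ) ≤ |a| := abs_nonneg _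
      have ht : 0 < t := by positivity
      have hta : t * a ≠ 0 := mul_ne_zero (ne_of_gt ht) ha
      have habs : |a| < |a| + 1 := by linarith
      have hb : ‖(t * a) • w‖ < ρ := by
        rw [norm_smul, Real.norm_eq_abs, abs_mul, abs_of_pos ht, htdef]
        rw [div_mul_eq_mul_div, div_mul_eq_mul_div, div_lt_iff₀ (by positivity)]
        nlinarith [mul_nonneg (mul_nonneg hρ.le h2) h1, hρ]
      have hb' : ‖t • (a • w)‖ < ρ := by rw [smul_smul]; exact hb
      rw [hQeq (a • w) t (ne_of_gt ht) hb', hQeq w (t * a) hta hb, smul_smul t a w,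
        smul_smul a (t * a)⁻¹]
      congr 1
      field_simp
  refine ⟨{ toFun := Qf, map_add' := hadd, map_smul' := hsmul }, ?_, ?_⟩
  · intro w m
    set t : ℝ := ρ / (2 * (‖w‖ + ‖m‖ + 1)) with htdef
    have h1 : (0:ℝ) ≤ ‖w‖ := norm_nonneg _
    have h2 : (0:ℝ) ≤ ‖m‖ := norm_nonneg _
    have ht : 0 < t := by positivity
    have hbw : ‖t • w‖ < ρ := by
      rw [norm_smul, Real.norm_eq_abs, abs_of_pos ht, htdef,
        div_mul_eq_mul_div, div_lt_iff₀ (by positivity)]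
      nlinarith
    have hbm : ‖t • m‖ < ρ := by
      rw [norm_smul, Real.norm_eq_abs, abs_of_pos ht, htdef,
        div_mul_eq_mul_div, div_lt_iff₀ (by positivity)]
      nlinarith
    show ⟪Qf w, m⟫ = -⟪w, Qf m⟫
    rw [hQeq w t (ne_of_gt ht) hbw, hQeq m t (ne_of_gt ht) hbm]
    rw [real_inner_smul_left, real_inner_smul_right]
    have e1 : ⟪v (t • w), m⟫ = t⁻¹ * ⟪v (t • w), t • m⟫ := by
      rw [real_inner_smul_right]
      field_simp
    have e2 : ⟪w, v (t • m)⟫ = t⁻¹ * ⟪t • w, v (t • m)⟫ := by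
      rw [real_inner_smul_left]
      field_simp
    rw [e1, e2]
    have e3 : ⟪v (t • w), t • m⟫ = -⟪v (t • m), t • w⟫ := hskew _ _ hbw hbm
    rw [e3, real_inner_comm (t • w) (v (t • m))]
    ring
  · intro h hh
    show Qf h = v h
    have := hQeq h 1 one_ne_zero (by simpa using hh)
    simpa using this

lemma localstruct {d : ℕ} (ε : ℝ) (hε : 0 < ε) (Ω : Set (EuclideanSpace ℝ (Fin d)))
    (hΩo : IsOpen Ω) (u : EuclideanSpace ℝ (Fin d) → EuclideanSpace ℝ (Fin d))
    (key : ∀ x ∈ Ω, ∀ y ∈ Ω, dist y x < ε → ⟪u y - u x, y - x⟫ = 0)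
    (x₀ : EuclideanSpace ℝ (Fin d)) (hx₀ : x₀ ∈ Ω) :
    ∃ ρ > 0, Metric.ball x₀ ρ ⊆ Ω ∧
      ∃ (Q : EuclideanSpace ℝ (Fin d) →ₗ[ℝ] EuclideanSpace ℝ (Fin d))
        (c : EuclideanSpace ℝ (Fin d)),
        (∀ v w : EuclideanSpace ℝ (Fin d), ⟪Q v, w⟫ = -⟪v, Q w⟫) ∧
        ∀ y ∈ Metric.ball x₀ ρ, u y = Q y + c := by
  obtain ⟨r₀, hr₀, hr₀sub⟩ := Metric.isOpen_iff.1 hΩo x₀ hx₀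
  set ρ := min r₀ (ε/3) with hρdef
  have hρ : 0 < ρ := lt_min hr₀ (by linarith)
  have hρε : 3 * ρ ≤ ε := by
    have := min_le_right r₀ (ε/3); linarith [this]
  have hsub : Metric.ball x₀ ρ ⊆ Ω :=
    (Metric.ball_subset_ball (min_le_left _ _)).trans hr₀sub
  set v : EuclideanSpace ℝ (Fin d) → EuclideanSpace ℝ (Fin d) :=
    fun h => u (x₀ + h) - u x₀ with hv
  have hball : ∀ h : EuclideanSpace ℝ (Fin d), ‖h‖ < ρ → x₀ + h ∈ Ω := by
    intro h hh
    apply hsub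
    rw [Metric.mem_ball, dist_eq_norm, add_sub_cancel_left]
    exact hh
  have hv0 : v 0 = 0 := by simp [hv]
  have hskew : ∀ h k : EuclideanSpace ℝ (Fin d), ‖h‖ < ρ → ‖k‖ < ρ →
      ⟪v h, k⟫ = -⟪v k, h⟫ := by
    intro h k hh hk
    have h1 : ⟪v h, h⟫ = 0 := by
      have := key x₀ hx₀ (x₀ + h) (hball h hh)
        (by rw [dist_eq_norm, add_sub_cancel_left]; linarith)
      rw [add_sub_cancel_left] at this
      exact this
    have h2 : ⟪v k, k⟫ = 0 := by
      have := key x₀ hx₀ (x₀ + k) (hball k hk)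
        (by rw [dist_eq_norm, add_sub_cancel_left]; linarith)
      rw [add_sub_cancel_left] at this
      exact this
    have h3 : ⟪v h - v k, h - k⟫ = 0 := by
      have hd : dist (x₀ + h) (x₀ + k) < ε := by
        rw [dist_eq_norm, add_sub_add_left_eq_sub]
        calc ‖h - k‖ ≤ ‖h‖ + ‖k‖ := norm_sub_le _ _
          _ < ε := by linarith
      have := key (x₀ + k) (hball k hk) (x₀ + h) (hball h hh) hd
      have he : u (x₀ + h) - u (x₀ + k) = v h - v k := by simp [hv]
      have he2 : (x₀ + h) - (x₀ + k) = h - k := by abel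
      rw [he, he2] at this
      exact this
    rw [inner_sub_left, inner_sub_right, inner_sub_right] at h3
    rw [h1, h2] at h3
    linarith [h3, real_inner_comm (v h) k, real_inner_comm (v k) h]
  have hlin : ∀ (a b : ℝ) (h k : EuclideanSpace ℝ (Fin d)), ‖h‖ < ρ → ‖k‖ < ρ →
      ‖a • h + b • k‖ < ρ → v (a • h + b • k) = a • v h + b • v k := by
    intro a b h k hh hk habk
    set w := v (a • h + b • k) - (a • v h + b • v k) with hw
    have hwm : ∀ m : EuclideanSpace ℝ (Fin d), ‖m‖ < ρ → ⟪w, m⟫ = 0 := by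
      intro m hm
      have e1 : ⟪v (a • h + b • k), m⟫ = -⟪v m, a • h + b • k⟫ := hskew _ m habk hm
      have e2 : ⟪v m, a • h + b • k⟫ = a * ⟪v m, h⟫ + b * ⟪v m, k⟫ := by
        rw [inner_add_right, real_inner_smul_right, real_inner_smul_right]
      have e3 : ⟪v m, h⟫ = -⟪v h, m⟫ := by
        have := hskew h m hh hm; linarith
      have e4 : ⟪v m, k⟫ = -⟪v k, m⟫ := by
        have := hskew k m hk hm; linarith
      rw [hw, inner_sub_left, inner_add_left, real_inner_smul_left, real_inner_smul_left]
      rw [e1, e2, e3, e4]; ring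
    by_contra hne
    have hwne : w ≠ 0 := fun h0 => hne (by rwa [hw, sub_eq_zero] at h0)
    have hwpos : 0 < ‖w‖ := norm_pos_iff.2 hwne
    have hm : ‖(ρ / (2 * ‖w‖)) • w‖ < ρ := by
      rw [norm_smul, Real.norm_eq_abs, abs_of_pos (by positivity)]
      rw [div_mul_eq_mul_div, mul_comm]
      rw [div_lt_iff₀ (by positivity)]
      nlinarith
    have hz := hwm _ hm
    rw [real_inner_smul_right, real_inner_self_eq_norm_sq] at hz
    have hpos : ρ / (2 * ‖w‖) * ‖w‖ ^ 2 > 0 := by positivity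
    linarith
  obtain ⟨Q, hQskew, hQv⟩ := linearize ρ hρ v hv0 hskew hlin
  refine ⟨ρ, hρ, hsub, Q, u x₀ - Q x₀, hQskew, ?_⟩
  intro y hy
  have hyn : ‖y - x₀‖ < ρ := by
    rw [← dist_eq_norm]
    exact Metric.mem_ball.1 hy
  have := hQv (y - x₀) hyn
  have hvy : v (y - x₀) = u y - u x₀ := by
    simp [hv]
  rw [hvy, map_sub] at this
  have heq : Q y - Q x₀ = u y - u x₀ := this
  have hz : u y - (Q y + (u x₀ - Q x₀)) = (u y - u x₀) - (Q y - Q x₀) := by abel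
  rw [← heq, sub_self] at hz
  exact sub_eq_zero.1 hz

lemma affine_unique {d : ℕ} (Q₁ Q₂ : EuclideanSpace ℝ (Fin d) →ₗ[ℝ] EuclideanSpace ℝ (Fin d))
    (c₁ c₂ : EuclideanSpace ℝ (Fin d)) (p : EuclideanSpace ℝ (Fin d)) (ρ : ℝ) (hρ : 0 < ρ)
    (h : ∀ y ∈ Metric.ball p ρ, Q₁ y + c₁ = Q₂ y + c₂) : Q₁ = Q₂ ∧ c₂ = c₁ := by
  have hsmall : ∀ w : EuclideanSpace ℝ (Fin d), ‖w‖ < ρ → Q₁ w = Q₂ w := by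
    intro w hw
    have h1 := h (p + w) (by rw [Metric.mem_ball, dist_eq_norm, add_sub_cancel_left]; exact hw)
    have h2 := h p (Metric.mem_ball_self hρ)
    rw [map_add, map_add] at h1
    have : Q₁ p + Q₁ w + c₁ - (Q₁ p + c₁) = Q₂ p + Q₂ w + c₂ - (Q₂ p + c₂) := by
      rw [h1, h2]
    simpa using this
  have hQ : Q₁ = Q₂ := by
    refine LinearMap.ext fun w => ?_
    have h1 : (0:ℝ) ≤ ‖w‖ := norm_nonneg _
    set t : ℝ := ρ / (2 * (‖w‖ + 1)) with htdef
    have ht : 0 < t := by positivity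
    have hb : ‖t • w‖ < ρ := by
      rw [norm_smul, Real.norm_eq_abs, abs_of_pos ht, htdef,
        div_mul_eq_mul_div, div_lt_iff₀ (by positivity)]
      nlinarith
    have := hsmall (t • w) hb
    rw [LinearMap.map_smul, LinearMap.map_smul] at this
    exact smul_right_injective _ (ne_of_gt ht) this
  refine ⟨hQ, ?_⟩
  have := h p (Metric.mem_ball_self hρ)
  rw [hQ] at this
  exact (add_left_cancel this).symm

theorem stmt_3 (d : ℕ) (hd : d = 2 ∨ d = 3) (ε : ℝ) (hε : 0 < ε)
    (Ω : Set (EuclideanSpace ℝ (Fin d))) (hΩo : IsOpen Ω) (hΩc : IsConnected Ω)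
    (hΩb : Bornology.IsBounded Ω)
    (u : EuclideanSpace ℝ (Fin d) → EuclideanSpace ℝ (Fin d))
    (hu : ContinuousOn u Ω) :
    ((∀ᵐ x ∂(volume.restrict Ω),
        ∀ᵐ y ∂(volume.restrict (Metric.ball x ε ∩ Ω)), strain y x u = 0) ↔
      ∃ (Q : EuclideanSpace ℝ (Fin d) →ₗ[ℝ] EuclideanSpace ℝ (Fin d))
        (c : EuclideanSpace ℝ (Fin d)),
        (∀ v w : EuclideanSpace ℝ (Fin d), ⟪Q v, w⟫ = -⟪v, Q w⟫) ∧
        ∀ x ∈ Ω, u x = Q x + c) := by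
  constructor
  · intro hae
    have key := ptwise ε Ω hΩo u hu hae
    obtain ⟨xs, hxs⟩ := hΩc.nonempty
    obtain ⟨ρs, hρs, hsubs, Q, c, hQskew, hreps⟩ := localstruct ε hε Ω hΩo u key xs hxs
    set S : Set (EuclideanSpace ℝ (Fin d)) :=
      {x | ∃ ρ > 0, Metric.ball x ρ ⊆ Ω ∧ ∀ y ∈ Metric.ball x ρ, u y = Q y + c} with hS
    have hSopen : IsOpen S := by
      rw [isOpen_iff_mem_nhds]
      rintro x ⟨ρ, hρ, hsub, hrep⟩
      refine Filter.mem_of_superset (Metric.ball_mem_nhds x hρ) ?_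
      intro x' hx'
      have hd' : dist x' x < ρ := Metric.mem_ball.1 hx'
      have hbb : Metric.ball x' (ρ - dist x' x) ⊆ Metric.ball x ρ := by
        intro y hy
        rw [Metric.mem_ball] at hy ⊢
        have := dist_triangle y x' x
        linarith
      exact ⟨ρ - dist x' x, by linarith, hbb.trans hsub, fun y hy => hrep y (hbb hy)⟩
    set T : Set (EuclideanSpace ℝ (Fin d)) := {x | x ∈ Ω ∧ x ∉ S} with hT
    have hTopen : IsOpen T := by
      rw [isOpen_iff_mem_nhds]
      rintro x ⟨hxΩ, hxS⟩
      obtain ⟨ρ', hρ', hsub', Q', c', hQ'skew, hrep'⟩ := localstruct ε hε Ω hΩo u key x hxΩ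
      refine Filter.mem_of_superset (Metric.ball_mem_nhds x hρ') ?_
      intro x' hx'
      refine ⟨hsub' hx', fun hx'S => hxS ?_⟩
      obtain ⟨ρ'', hρ'', hsub'', hrep''⟩ := hx'S
      have hd' : dist x' x < ρ' := Metric.mem_ball.1 hx'
      set δ := min ρ'' (ρ' - dist x' x) with hδdef
      have hδ : 0 < δ := lt_min hρ'' (by linarith)
      have hagree : ∀ y ∈ Metric.ball x' δ, Q' y + c' = Q y + c := by
        intro y hy
        have hy1 : y ∈ Metric.ball x' ρ'' :=
          Metric.ball_subset_ball (min_le_left _ _) hy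
        have hy2 : y ∈ Metric.ball x ρ' := by
          rw [Metric.mem_ball] at hy ⊢
          have := dist_triangle y x' x
          have := min_le_right ρ'' (ρ' - dist x' x)
          linarith
        rw [← hrep'' y hy1, ← hrep' y hy2]
      obtain ⟨hQQ, hcc⟩ := affine_unique Q' Q c' c x' δ hδ hagree
      exact ⟨ρ', hρ', hsub', fun y hy => by rw [hrep' y hy, hQQ, hcc]⟩
    have hUnion : Ω ⊆ S ∪ T := by
      intro x hx
      by_cases hxS : x ∈ S
      · exact Or.inl hxS
      · exact Or.inr ⟨hx, hxS⟩
    have hSne : (Ω ∩ S).Nonempty := ⟨xs, hxs, ρs, hρs, hsubs, hreps⟩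
    have hTempty : Ω ∩ T = ∅ := by
      by_contra hne
      have hTne : (Ω ∩ T).Nonempty := Set.nonempty_iff_ne_empty.2 hne
      obtain ⟨z, _, hzS, _, hzNS⟩ :=
        hΩc.isPreconnected S T hSopen hTopen hUnion hSne hTne
      exact hzNS hzS
    refine ⟨Q, c, hQskew, fun x hx => ?_⟩
    have hxS : x ∈ S := by
      by_contra hxS
      have : x ∈ Ω ∩ T := ⟨hx, hx, hxS⟩
      rw [hTempty] at this
      exact this
    obtain ⟨ρ, hρ, _, hrep⟩ := hxS
    exact hrep x (Metric.mem_ball_self hρ)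
  · rintro ⟨Q, c, hQskew, hrep⟩
    refine (ae_restrict_iff' hΩo.measurableSet).2 (ae_of_all _ fun x hxΩ => ?_)
    refine (ae_restrict_iff' (measurableSet_ball.inter hΩo.measurableSet)).2
      (ae_of_all _ fun y hy => ?_)
    obtain ⟨hyb, hyΩ⟩ := hy
    have hdiff : u y - u x = Q (y - x) := by
      rw [hrep y hyΩ, hrep x hxΩ, map_sub]
      abel
    have hz : ⟪Q (y - x), y - x⟫ = 0 := by
      have h1 := hQskew (y - x) (y - x)
      have h2 := real_inner_comm (y - x) (Q (y - x))
      linarith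
    rw [strain_eq, hdiff, hz]
    ring
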